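/- arXiv:1809.08938 — 2 statements merged into one kernel-verified Lean document; each statement's English description precedes it below -/
import Mathlib

section
/- Let N : ℤ^{≥0} × ℤ^{≥0} → ℚ satisfy N(1,0) = N(0,1) = 1, and set N₂(d) = Σ_{a+b=d, a,b ≥ 0} N(a,b). Let W : ℤ⁺ × ℤ^{≥0} → ℚ satisfy W(1,0) = W(1,1) = 1 together with recursion (I′) at every (d,l) with d ≥ 2 and 1 ≤ l ≤ 2d−1, and recursion (II′) at every (d,l) with d ≥ 2 and l ≥ 2. Then for every integer d ≥ 2: W(d,0) = (1/(2(d−1))) · Σ_{d₁,d₂ ≥ 1, d₁+d₂=d} ( d₁·C(4d−2, 4d₁−2) − (d₂+1)·C(4d−2, 4d₁−3) ) · W(d₁,0)·W(d₂+1,1). -/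
open Finset

/-- Binomial coefficient `C(n,k)` as a rational number, with the convention that
`C(n,k) = 0` whenever `k < 0` or `k > n`. -/
def binom (n k : ℤ) : ℚ :=
  if 0 ≤ k ∧ k ≤ n then (n.toNat.choose k.toNat : ℚ) else 0

/-- Pairs `(d₁, d₂)` of positive integers with `d₁ + d₂ = d`. -/
def pairsSum (d : ℕ) : Finset (ℕ × ℕ) :=
  (Finset.HasAntidiagonal.antidiagonal d).filter fun p => 1 ≤ p.1 ∧ 1 ≤ p.2

/-- `N₂(d) = ∑_{a+b=d, a,b ≥ 0} N(a,b)`. -/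
def Ntot (N : ℕ → ℕ → ℚ) (d : ℕ) : ℚ :=
  ∑ p ∈ Finset.HasAntidiagonal.antidiagonal d, N p.1 p.2

/-- The term `T₀(d,l) = −(−1)^d 2^{l−2} d² N₂(d)` if `l = 2d−1` and `0` otherwise;
the power `2^{l−2}` is taken in `ℚ`. -/
def T0tw (N : ℕ → ℕ → ℚ) (d l : ℕ) : ℚ :=
  if l + 1 = 2 * d then
    -((-1 : ℚ) ^ d * (2 : ℚ) ^ ((l : ℤ) - 2)) * (d : ℚ) ^ 2 * Ntot N d
  else 0

/-- Recursion (I′) for the Welschinger invariants of `(ℙ¹×ℙ¹, τ'₁,₁)`. -/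
def RecItw (N : ℕ → ℕ → ℚ) (W : ℕ → ℕ → ℚ) (d l : ℕ) : Prop :=
  W d l = T0tw N d l
    - ∑ p ∈ pairsSum d,
        (-1 : ℚ) ^ p.2 * (2 : ℚ) ^ (2 * p.2 - 2) * (p.1 : ℚ) * (p.2 : ℚ) ^ 3
          * binom ((l : ℤ) - 1) (2 * (p.2 : ℤ) - 1) * Ntot N p.2 * W p.1 (l - 2 * p.2)
    + 2 * ∑ q ∈ pairsSum d, ∑ r ∈ Finset.HasAntidiagonal.antidiagonal (l - 1),
        binom ((l : ℤ) - 1) (r.1 : ℤ)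
          * ((q.1 : ℚ) * (q.2 : ℚ)
                * binom (4 * (d : ℤ) - 2 * (l : ℤ) - 2) (4 * (q.1 : ℤ) - 2 * (r.1 : ℤ) - 2)
              - (q.1 : ℚ) ^ 2
                * binom (4 * (d : ℤ) - 2 * (l : ℤ) - 2) (4 * (q.1 : ℤ) - 2 * (r.1 : ℤ) - 1))
          * W q.1 r.1 * W q.2 r.2

/-- Recursion (II′) for the Welschinger invariants of `(ℙ¹×ℙ¹, τ'₁,₁)`. -/
def RecIItw (N : ℕ → ℕ → ℚ) (W : ℕ → ℕ → ℚ) (d l : ℕ) : Prop :=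
  W d l =
    ∑ p ∈ pairsSum d,
        (-1 : ℚ) ^ p.2 * (2 : ℚ) ^ (2 * p.2 - 2) * (p.1 : ℚ) * (p.2 : ℚ) ^ 2
          * ((p.1 : ℚ) * binom ((l : ℤ) - 2) (2 * (p.2 : ℤ) - 2)
              - (p.2 : ℚ) * binom ((l : ℤ) - 2) (2 * (p.2 : ℤ) - 1))
          * Ntot N p.2 * W p.1 (l - 2 * p.2)
    + 2 * ∑ q ∈ pairsSum d, ∑ r ∈ Finset.HasAntidiagonal.antidiagonal (l - 2),
        binom ((l : ℤ) - 2) (r.1 : ℤ)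
          * ((q.1 : ℚ) * (q.2 : ℚ)
                * binom (4 * (d : ℤ) - 2 * (l : ℤ) - 1) (4 * (q.1 : ℤ) - 2 * (r.1 : ℤ) - 2)
              - (q.1 : ℚ) ^ 2
                * binom (4 * (d : ℤ) - 2 * (l : ℤ) - 1) (4 * (q.1 : ℤ) - 2 * (r.1 : ℤ) - 1))
          * W q.1 r.1 * W q.2 (r.2 + 1)

/-- The formula for the purely real Welschinger invariant `W(d,0)` of
`(ℙ¹×ℙ¹, τ'₁,₁)`. -/
def Formulatw (W : ℕ → ℕ → ℚ) (d : ℕ) : Prop :=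
  W d 0 = (1 / (2 * ((d : ℚ) - 1))) *
    ∑ q ∈ pairsSum d,
      ((q.1 : ℚ) * binom (4 * (d : ℤ) - 2) (4 * (q.1 : ℤ) - 2)
        - ((q.2 : ℚ) + 1) * binom (4 * (d : ℤ) - 2) (4 * (q.1 : ℤ) - 3))
      * W q.1 0 * W (q.2 + 1) 1

/-!
Evaluate (I′) and (II′) at `(d + 1, 2)`. Their linear terms reduce to the splitting `d′ = 1`,
where `N₂(1) = 2`, so subtracting the two relations eliminates `W(d + 1, 2)`. Pascal's rule
`C(4d−1, k) = C(4d−2, k) + C(4d−2, k−1)`, together with the symmetry `C(4d−2, k) = C(4d−2, 4d−2−k)`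
under swapping the two halves of a splitting of `d + 1`, turns the quadratic terms into `d + 1`
times a single sum over splittings. Its `(d, 1)` summand is `(2 − 3d) W(d, 0)`; the others are
the summands of the formula.
-/

lemma binom_natCast (n k : ℕ) : binom n k = n.choose k := by
  unfold binom
  split_ifs with h
  · simp
  · rw [Nat.choose_eq_zero_of_lt (by omega), Nat.cast_zero]

lemma binom_of_neg {n k : ℤ} (hk : k < 0) : binom n k = 0 :=
  if_neg (by omega)

lemma binom_of_lt {n k : ℤ} (hk : n < k) : binom n k = 0 :=
  if_neg (by omega)

lemma binom_symm (n k : ℤ) : binom n (n - k) = binom n k := by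
  unfold binom
  split_ifs with h₁ h₂ h₂
  · obtain ⟨m, rfl⟩ := Int.eq_ofNat_of_zero_le (h₂.1.trans h₂.2)
    obtain ⟨j, rfl⟩ := Int.eq_ofNat_of_zero_le h₂.1
    rw [show (m : ℤ) - j = ((m - j : ℕ) : ℤ) by omega]
    simp only [Int.toNat_natCast]
    rw [Nat.choose_symm (by omega)]
  all_goals first | rfl | omega

lemma binom_succ {n : ℤ} (hn : 0 ≤ n) (k : ℤ) :
    binom (n + 1) k = binom n k + binom n (k - 1) := by
  obtain ⟨m, rfl⟩ := Int.eq_ofNat_of_zero_le hn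
  rcases lt_or_ge k 1 with hk | hk
  · rcases lt_or_ge k 0 with hk' | hk'
    · simp [binom_of_neg hk', binom_of_neg (show k - 1 < 0 by omega)]
    · obtain rfl : k = 0 := by omega
      norm_num [binom]
      omega
  · obtain ⟨j, rfl⟩ : ∃ j : ℕ, k = j + 1 := ⟨(k - 1).toNat, by omega⟩
    rw [add_sub_cancel_right, ← Nat.cast_one, ← Nat.cast_add, ← Nat.cast_add, binom_natCast,
      binom_natCast, binom_natCast, Nat.choose_succ_succ', Nat.cast_add, add_comm]

lemma binom_self {n : ℤ} (hn : 0 ≤ n) : binom n n = 1 := by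
  obtain ⟨m, rfl⟩ := Int.eq_ofNat_of_zero_le hn
  simp [binom_natCast]

lemma binom_sub_one {n : ℤ} (hn : 0 ≤ n) : binom n (n - 1) = n := by
  obtain ⟨m, rfl⟩ := Int.eq_ofNat_of_zero_le hn
  rw [binom_symm, ← Nat.cast_one, binom_natCast]
  simp

lemma binom_zero_right {n : ℤ} (hn : 0 ≤ n) : binom n 0 = 1 := by
  rw [← binom_symm, sub_zero, binom_self hn]

section PairsSum

variable {M : Type*} [AddCommMonoid M]

lemma mem_pairsSum {d : ℕ} {q : ℕ × ℕ} :
    q ∈ pairsSum d ↔ q.1 + q.2 = d ∧ 1 ≤ q.1 ∧ 1 ≤ q.2 := by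
  simp [pairsSum]

lemma sum_pairsSum_swap (d : ℕ) (f : ℕ × ℕ → M) :
    ∑ q ∈ pairsSum d, f q.swap = ∑ q ∈ pairsSum d, f q :=
  Finset.sum_nbij' Prod.swap Prod.swap (by simp [mem_pairsSum]; omega)
    (by simp [mem_pairsSum]; omega) (by simp) (by simp) (by simp)

lemma sum_pairsSum_succ {d : ℕ} (hd : 1 ≤ d) (f : ℕ × ℕ → M) :
    ∑ q ∈ pairsSum (d + 1), f q = ∑ q ∈ pairsSum d, f (q.1, q.2 + 1) + f (d, 1) := by
  have hsplit : pairsSum (d + 1) =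
      insert (d, 1) ((pairsSum d).image fun q => (q.1, q.2 + 1)) := by
    ext ⟨a, b⟩
    simp only [mem_insert, mem_image, mem_pairsSum, Prod.mk.injEq, Prod.exists]
    constructor
    · rintro ⟨hab, ha, hb⟩
      rcases Nat.lt_or_ge 1 b with h | h
      · exact Or.inr ⟨a, b - 1, ⟨by omega, ha, by omega⟩, rfl, by omega⟩
      · exact Or.inl ⟨by omega, by omega⟩
    · rintro (⟨rfl, rfl⟩ | ⟨a, b, ⟨hab, ha, hb⟩, rfl, rfl⟩) <;> omega
  rw [hsplit, sum_insert (by simp [mem_pairsSum]), sum_image (by simp [Prod.ext_iff]), add_comm]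

end PairsSum

lemma Ntot_one (N : ℕ → ℕ → ℚ) : Ntot N 1 = N 0 1 + N 1 0 := by
  simp [Ntot, Finset.Nat.sum_antidiagonal_succ]

lemma sum_pairsSum_pascal_reflect (d : ℕ) (u v : ℕ → ℚ) :
    ∑ q ∈ pairsSum (d + 1),
        ((q.1 * q.2 * binom (4 * d - 2) (4 * q.1 - 2) - q.1 ^ 2 * binom (4 * d - 2) (4 * q.1 - 1))
            * u q.1 * v q.2
          + (q.1 * q.2 * binom (4 * d - 2) (4 * q.1 - 4) - q.1 ^ 2 * binom (4 * d - 2) (4 * q.1 - 3))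
            * v q.1 * u q.2)
      - ∑ q ∈ pairsSum (d + 1),
        (q.1 * q.2 * binom (4 * d - 1) (4 * q.1 - 2) - q.1 ^ 2 * binom (4 * d - 1) (4 * q.1 - 1))
          * u q.1 * v q.2
      = (d + 1) * ∑ q ∈ pairsSum (d + 1),
        (q.1 * binom (4 * d - 2) (4 * q.1 - 2) - q.2 * binom (4 * d - 2) (4 * q.1 - 3))
          * u q.1 * v q.2 := by
  rw [sum_add_distrib, ← sum_pairsSum_swap _ fun q : ℕ × ℕ =>
    (q.1 * q.2 * binom (4 * d - 2) (4 * q.1 - 4) - q.1 ^ 2 * binom (4 * d - 2) (4 * q.1 - 3))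
      * v q.1 * u q.2, mul_sum, ← sum_add_distrib, ← sum_sub_distrib]
  refine sum_congr rfl fun q hq => ?_
  obtain ⟨hq, hq₁, hq₂⟩ := mem_pairsSum.1 hq
  have hd : (d : ℚ) + 1 = q.1 + q.2 := by exact_mod_cast hq.symm
  have hpascal₁ : binom (4 * d - 1) (4 * q.1 - 2)
      = binom (4 * d - 2) (4 * q.1 - 2) + binom (4 * d - 2) (4 * q.1 - 3) := by
    rw [show (4 * d - 1 : ℤ) = 4 * d - 2 + 1 by ring, binom_succ (by omega)]
    ring_nf
  have hpascal₂ : binom (4 * d - 1) (4 * q.1 - 1)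
      = binom (4 * d - 2) (4 * q.1 - 1) + binom (4 * d - 2) (4 * q.1 - 2) := by
    rw [show (4 * d - 1 : ℤ) = 4 * d - 2 + 1 by ring, binom_succ (by omega)]
    ring_nf
  have hreflect₁ : binom (4 * d - 2) (4 * q.2 - 4) = binom (4 * d - 2) (4 * q.1 - 2) := by
    rw [← binom_symm _ (4 * q.1 - 2)]
    congr 1
    omega
  have hreflect₂ : binom (4 * d - 2) (4 * q.2 - 3) = binom (4 * d - 2) (4 * q.1 - 3) := by
    rw [← binom_symm _ (4 * q.1 - 3)]
    congr 1
    omega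
  rw [Prod.fst_swap, Prod.snd_swap, hpascal₁, hpascal₂, hreflect₁, hreflect₂, hd]
  ring

section RecursionsAtTwo

variable {N W : ℕ → ℕ → ℚ} {d : ℕ}

lemma RecItw.eq_at_two (hd : 1 ≤ d) (h : RecItw N W (d + 1) 2) :
    W (d + 1) 2 = d * Ntot N 1 * W d 0 + 2 * ∑ q ∈ pairsSum (d + 1),
      (((q.1 * q.2 * binom (4 * d - 2) (4 * q.1 - 2) - q.1 ^ 2 * binom (4 * d - 2) (4 * q.1 - 1))
          * W q.1 0 * W q.2 1)
        + (q.1 * q.2 * binom (4 * d - 2) (4 * q.1 - 4) - q.1 ^ 2 * binom (4 * d - 2) (4 * q.1 - 3))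
          * W q.1 1 * W q.2 0) := by
  rw [RecItw, T0tw, if_neg (by omega), sum_pairsSum_succ hd,
    sum_eq_zero fun q hq => ?vanish] at h
  case vanish =>
    rw [binom_of_lt (by rw [mem_pairsSum] at hq; push_cast; omega)]
    ring
  rw [h]
  simp only [pow_one, mul_one, tsub_self, pow_zero, neg_mul, one_mul, Nat.cast_one, one_pow,
    Nat.cast_ofNat, Int.reduceSub, zero_le_one, binom_self, zero_add, sub_neg_eq_add,
    Nat.add_one_sub_one, Nat.cast_add, Int.reduceMul, Nat.sum_antidiagonal_succ,
    CharP.cast_eq_zero, binom_zero_right, mul_zero, sub_zero, HasAntidiagonal.antidiagonal_zero,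
    sum_singleton, add_right_inj, mul_eq_mul_left_iff, OfNat.ofNat_ne_zero, or_false]
  ring_nf

lemma RecIItw.eq_at_two (hd : 1 ≤ d) (h : RecIItw N W (d + 1) 2) :
    W (d + 1) 2 = -(d ^ 2 * Ntot N 1 * W d 0) + 2 * ∑ q ∈ pairsSum (d + 1),
      (q.1 * q.2 * binom (4 * d - 1) (4 * q.1 - 2) - q.1 ^ 2 * binom (4 * d - 1) (4 * q.1 - 1))
        * W q.1 0 * W q.2 1 := by
  rw [RecIItw, sum_pairsSum_succ hd, sum_eq_zero fun q hq => ?vanish] at h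
  case vanish =>
    rw [mem_pairsSum] at hq
    rw [binom_of_lt (by push_cast; omega), binom_of_lt (by push_cast; omega)]
    ring
  rw [h]
  simp only [pow_one, mul_one, tsub_self, pow_zero, neg_mul, one_mul, Nat.cast_one, one_pow,
    Nat.cast_ofNat, sub_self, Std.le_refl, binom_self, Int.reduceSub,
    binom_of_lt (show (0 : ℤ) < 1 by norm_num), mul_zero, sub_zero, zero_add,
    HasAntidiagonal.antidiagonal_zero, Nat.cast_add, Int.reduceMul, sum_singleton,
    CharP.cast_eq_zero]
  ring_nf

lemma sum_pairsSum_eq_neg_mul_of_rec_at_two (hN : Ntot N 1 = 2) (hd : 1 ≤ d)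
    (hI : RecItw N W (d + 1) 2) (hII : RecIItw N W (d + 1) 2) :
    ∑ q ∈ pairsSum (d + 1),
        (q.1 * binom (4 * d - 2) (4 * q.1 - 2) - q.2 * binom (4 * d - 2) (4 * q.1 - 3))
          * W q.1 0 * W q.2 1 = -(d * W d 0) := by
  have hrec := (hI.eq_at_two hd).symm.trans (hII.eq_at_two hd)
  have key := sum_pairsSum_pascal_reflect d (W · 0) (W · 1)
  rw [hN] at hrec
  apply mul_left_cancel₀ (show (d : ℚ) + 1 ≠ 0 by positivity)
  linear_combination -key + hrec / 2

end RecursionsAtTwo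

theorem stmt_7_general (N : ℕ → ℕ → ℚ) (W : ℕ → ℕ → ℚ)
    (hN10 : N 1 0 = 1) (hN01 : N 0 1 = 1)
    (hW11 : W 1 1 = 1)
    (hI : ∀ d l : ℕ, 2 ≤ d → 1 ≤ l → l + 1 ≤ 2 * d → RecItw N W d l)
    (hII : ∀ d l : ℕ, 2 ≤ d → 2 ≤ l → RecIItw N W d l) :
    ∀ d : ℕ, 2 ≤ d → Formulatw W d := by
  intro d hd
  have hN : Ntot N 1 = 2 := by rw [Ntot_one, hN01, hN10]; norm_num
  have hsum := sum_pairsSum_eq_neg_mul_of_rec_at_two hN (by omega)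
    (hI (d + 1) 2 (by omega) one_le_two (by omega)) (hII (d + 1) 2 (by omega) le_rfl)
  have htop : binom (4 * d - 2) (4 * d - 3) = 4 * d - 2 := by
    rw [show (4 * d - 3 : ℤ) = 4 * d - 2 - 1 by ring, binom_sub_one (by omega)]
    push_cast
    ring
  rw [sum_pairsSum_succ (by omega), htop, binom_self (by omega), hW11] at hsum
  have hd₁ : 2 * ((d : ℚ) - 1) ≠ 0 :=
    mul_ne_zero two_ne_zero (sub_ne_zero.2 (by exact_mod_cast (by omega : d ≠ 1)))
  push_cast at hsum
  rw [Formulatw, one_div, eq_inv_mul_iff_mul_eq₀ hd₁]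
  linear_combination -hsum

/-- The WDVV-type relations for `(ℙ¹×ℙ¹, τ'₁,₁)` imply the formula for the
purely real invariants `W(d,0)` for all `d ≥ 2`. -/
theorem stmt_7 (N : ℕ → ℕ → ℚ) (W : ℕ → ℕ → ℚ)
    (hN10 : N 1 0 = 1) (hN01 : N 0 1 = 1)
    (hW10 : W 1 0 = 1) (hW11 : W 1 1 = 1)
    (hI : ∀ d l : ℕ, 2 ≤ d → 1 ≤ l → l + 1 ≤ 2 * d → RecItw N W d l)
    (hII : ∀ d l : ℕ, 2 ≤ d → 2 ≤ l → RecIItw N W d l) :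
    ∀ d : ℕ, 2 ≤ d → Formulatw W d :=
  stmt_7_general N W hN10 hN01 hW11 hI hII
end

section
/- Let N : ℤ^{≥0} × ℤ^{≥0} → ℚ be any function. Then there is at most one function W, defined on triples (a,b,l) of nonnegative integers with (a,b) ≠ (0,0), such that: W(a,b,l) = W(b,a,l) for all (a,b,l); W(1,b,l) = 1 whenever 0 ≤ l ≤ b; W(a,0,l) = 0 for all a ≥ 2 and all l; W(a,b,l) = 0 whenever 2l > 2(a+b)−1; W satisfies recursion (τ1a) at every (a,b,l) with (a,b) ≠ (0,0), l ≥ 1, and a+b−l ≥ 1; and W satisfies recursion (τ1b) at every (a,b) with a ≥ 2 and b ≥ 1. That is, any two such functions agree everywhere. -/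
open Finset

/-- Quadruples `(a',b')` (recording `(a₀,b₀) = (a−2a', b−2b')`) with
`a₀ + 2a' = a`, `b₀ + 2b' = b`, `(a₀,b₀) ≠ (0,0)` and `(a',b') ≠ (0,0)`. -/
def quadHalf (a b : ℕ) : Finset (ℕ × ℕ) :=
  (Finset.range (a + 1) ×ˢ Finset.range (b + 1)).filter
    fun p => 2 * p.1 ≤ a ∧ 2 * p.2 ≤ b ∧ 1 ≤ p.1 + p.2
      ∧ 1 ≤ (a - 2 * p.1) + (b - 2 * p.2)

/-- Splittings `((a₁,a₂),(b₁,b₂))` with `a₁+a₂ = a`, `b₁+b₂ = b`,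
`(a₁,b₁) ≠ (0,0)` and `(a₂,b₂) ≠ (0,0)`. -/
def quadSum (a b : ℕ) : Finset ((ℕ × ℕ) × (ℕ × ℕ)) :=
  (Finset.HasAntidiagonal.antidiagonal a ×ˢ Finset.HasAntidiagonal.antidiagonal b).filter
    fun pq => 1 ≤ pq.1.1 + pq.2.1 ∧ 1 ≤ pq.1.2 + pq.2.2

/-- The term `T₀ = −2^{l−3} a b N(a/2,b/2)` if `a` and `b` are both even and
`l = a+b−1`, and `0` otherwise; the power `2^{l−3}` is taken in `ℚ`. -/
def T0pr (N : ℕ → ℕ → ℚ) (a b l : ℕ) : ℚ :=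
  if Even a ∧ Even b ∧ l + 1 = a + b then
    -((2 : ℚ) ^ ((l : ℤ) - 3)) * (a : ℚ) * (b : ℚ) * N (a / 2) (b / 2)
  else 0

/-- Recursion (τ1a) for the Welschinger invariants of `(ℙ¹×ℙ¹, τ₁,₁)`. -/
def RecT1a (N : ℕ → ℕ → ℚ) (W : ℕ → ℕ → ℕ → ℚ) (a b l : ℕ) : Prop :=
  W a b l = T0pr N a b l
    - ∑ p ∈ quadHalf a b,
        (2 : ℚ) ^ (2 * (p.1 + p.2) - 1) * (p.1 : ℚ) * (p.2 : ℚ)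
          * (((a - 2 * p.1 : ℕ) : ℚ) * (p.2 : ℚ) + ((b - 2 * p.2 : ℕ) : ℚ) * (p.1 : ℚ))
          * binom ((l : ℤ) - 1) (2 * ((p.1 : ℤ) + (p.2 : ℤ)) - 1)
          * N p.1 p.2 * W (a - 2 * p.1) (b - 2 * p.2) (l - 2 * (p.1 + p.2))
    + ∑ pq ∈ quadSum a b, ∑ r ∈ Finset.HasAntidiagonal.antidiagonal (l - 1),
        (pq.2.1 : ℚ) * binom ((l : ℤ) - 1) (r.1 : ℤ)
          * ((pq.1.2 : ℚ)
                * binom (2 * ((a : ℤ) + (b : ℤ)) - 2 * (l : ℤ) - 2)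
                    (2 * ((pq.1.1 : ℤ) + (pq.2.1 : ℤ)) - 2 * (r.1 : ℤ) - 2)
              - (pq.1.1 : ℚ)
                * binom (2 * ((a : ℤ) + (b : ℤ)) - 2 * (l : ℤ) - 2)
                    (2 * ((pq.1.1 : ℤ) + (pq.2.1 : ℤ)) - 2 * (r.1 : ℤ) - 1))
          * W pq.1.1 pq.2.1 r.1 * W pq.1.2 pq.2.2 r.2

/-- Recursion (τ1b) for the purely real Welschinger invariants of
`(ℙ¹×ℙ¹, τ₁,₁)`. -/
def RecT1b (W : ℕ → ℕ → ℕ → ℚ) (a b : ℕ) : Prop :=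
  W a b 0 = (1 / (2 * ((a : ℚ) - 1))) *
    ∑ pq ∈ (Finset.HasAntidiagonal.antidiagonal a ×ˢ Finset.HasAntidiagonal.antidiagonal (b + 1)).filter
        (fun pq => 1 ≤ pq.1.1 ∧ 1 ≤ pq.1.2 ∧ 1 ≤ pq.2.1 ∧ 1 ≤ pq.2.2),
      ((pq.2.1 : ℚ) * (pq.2.2 : ℚ)
            * binom (2 * ((a : ℤ) + (b : ℤ)) - 2)
                (2 * ((pq.1.1 : ℤ) + (pq.2.1 : ℤ)) - 2)
          - (pq.2.1 : ℚ) ^ 2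
            * binom (2 * ((a : ℤ) + (b : ℤ)) - 2)
                (2 * ((pq.1.1 : ℤ) + (pq.2.1 : ℤ)) - 1))
        * W pq.1.1 pq.2.1 0 * W pq.1.2 pq.2.2 0

/-- The conditions on the Welschinger invariants `W(a,b,l)` of `(ℙ¹×ℙ¹, τ₁,₁)`:
symmetry, base cases, dimension vanishing, and recursions (τ1a) and (τ1b). -/
def GoodWpr (N : ℕ → ℕ → ℚ) (W : ℕ → ℕ → ℕ → ℚ) : Prop :=
  (∀ a b l : ℕ, 1 ≤ a + b → W a b l = W b a l)
    ∧ (∀ b l : ℕ, l ≤ b → W 1 b l = 1)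
    ∧ (∀ a l : ℕ, 2 ≤ a → W a 0 l = 0)
    ∧ (∀ a b l : ℕ, 1 ≤ a + b → a + b ≤ l → W a b l = 0)
    ∧ (∀ a b l : ℕ, 1 ≤ l → l + 1 ≤ a + b → RecT1a N W a b l)
    ∧ (∀ a b : ℕ, 2 ≤ a → 1 ≤ b → RecT1b W a b)

/-!
Each recursion expresses `W a b l` through values of `W` at bidegrees of strictly smaller
total degree `a + b`: the summands of (τ1a) and (τ1b) involve either a splitting of `(a,b)`
into two nonzero bidegrees, or the nonzero bidegree `(a - 2a', b - 2b')` with `(a',b') ≠ (0,0)`.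
The base cases and the vanishing condition cover everything else, so two solutions agree
by induction on `a + b`.
-/

def AgreeBelow (W W' : ℕ → ℕ → ℕ → ℚ) (n : ℕ) : Prop :=
  ∀ a b l : ℕ, 1 ≤ a + b → a + b < n → W a b l = W' a b l

theorem RecT1a.eq_of_agreeBelow {N : ℕ → ℕ → ℚ} {W W' : ℕ → ℕ → ℕ → ℚ} {a b l : ℕ}
    (h : RecT1a N W a b l) (h' : RecT1a N W' a b l) (hlow : AgreeBelow W W' (a + b)) :
    W a b l = W' a b l := by
  rw [h, h']
  congr 1
  · congr 1
    refine sum_congr rfl fun p hp => ?_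
    simp only [quadHalf, mem_filter, mem_product, mem_range] at hp
    rw [hlow _ _ _ (by omega) (by omega)]
  · refine sum_congr rfl fun pq hpq => sum_congr rfl fun r _ => ?_
    simp only [quadSum, mem_filter, mem_product, HasAntidiagonal.mem_antidiagonal] at hpq
    rw [hlow _ _ _ (by omega) (by omega), hlow _ _ _ (by omega) (by omega)]

theorem RecT1b.eq_of_agreeBelow {W W' : ℕ → ℕ → ℕ → ℚ} {a b : ℕ}
    (h : RecT1b W a b) (h' : RecT1b W' a b) (hlow : AgreeBelow W W' (a + b)) :
    W a b 0 = W' a b 0 := by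
  rw [h, h']
  congr 1
  refine sum_congr rfl fun pq hpq => ?_
  simp only [mem_filter, mem_product, HasAntidiagonal.mem_antidiagonal] at hpq
  rw [hlow _ _ _ (by omega) (by omega), hlow _ _ _ (by omega) (by omega)]

namespace GoodWpr

variable {N : ℕ → ℕ → ℚ} {W W' : ℕ → ℕ → ℕ → ℚ}

theorem eq_of_agreeBelow_of_pos (hW : GoodWpr N W) (hW' : GoodWpr N W') {a b l : ℕ}
    (ha : 1 ≤ a) (hlow : AgreeBelow W W' (a + b)) : W a b l = W' a b l := by
  obtain ⟨-, hone, hzero, hvan, hT1a, hT1b⟩ := hW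
  obtain ⟨-, hone', hzero', hvan', hT1a', hT1b'⟩ := hW'
  rcases Nat.eq_zero_or_pos l with rfl | hl
  · obtain rfl | ha2 := ha.eq_or_lt
    · rw [hone b 0 b.zero_le, hone' b 0 b.zero_le]
    obtain rfl | hb := Nat.eq_zero_or_pos b
    · rw [hzero a 0 ha2, hzero' a 0 ha2]
    · exact RecT1b.eq_of_agreeBelow (hT1b a b ha2 hb) (hT1b' a b ha2 hb) hlow
  · rcases le_or_gt (a + b) l with hle | hlt
    · rw [hvan a b l (by omega) hle, hvan' a b l (by omega) hle]
    · exact RecT1a.eq_of_agreeBelow (hT1a a b l hl hlt) (hT1a' a b l hl hlt) hlow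

theorem eq_of_agreeBelow (hW : GoodWpr N W) (hW' : GoodWpr N W') {a b l : ℕ}
    (hab : 1 ≤ a + b) (hlow : AgreeBelow W W' (a + b)) : W a b l = W' a b l := by
  obtain rfl | ha := Nat.eq_zero_or_pos a
  · rw [hW.1 0 b l hab, hW'.1 0 b l hab]
    exact hW.eq_of_agreeBelow_of_pos hW' (by omega) (by simpa using hlow)
  · exact hW.eq_of_agreeBelow_of_pos hW' ha hlow

theorem agreeBelow (hW : GoodWpr N W) (hW' : GoodWpr N W') (n : ℕ) : AgreeBelow W W' n := by
  induction n with
  | zero => intro a b l _ h; omega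
  | succ n ih =>
    intro a b l hab hlt
    obtain hlt | rfl := Nat.lt_succ_iff_lt_or_eq.mp hlt
    · exact ih a b l hab hlt
    · exact hW.eq_of_agreeBelow hW' hab ih

end GoodWpr

/-- There is at most one function `W` on triples `(a,b,l)` with `(a,b) ≠ (0,0)`
satisfying all the conditions of `GoodWpr`. -/
theorem stmt_10 (N : ℕ → ℕ → ℚ) (W W' : ℕ → ℕ → ℕ → ℚ)
    (hW : GoodWpr N W) (hW' : GoodWpr N W') :
    ∀ a b l : ℕ, 1 ≤ a + b → W a b l = W' a b l :=
  fun a b l hab => hW.agreeBelow hW' (a + b + 1) a b l hab (Nat.lt_succ_self _)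
end
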